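/- arXiv:0809.3482 — 3 statements merged into one kernel-verified Lean document; each statement's English description precedes it below -/
import Mathlib

section
/- For every integer r ≥ 1 there is a constant C > 0 (depending only on r) such that for every prime p not dividing 6 with p ≡ 1 (mod r) and every γ ∈ 𝔽_p^×: | #{(a,b) ∈ 𝔽_p² : there exists c ∈ 𝔽_p with −16(4a³+27b²) = γ·c^r} − p²/r | ≤ C·p^{3/2}. -/
/-!
Let `χ` be a complex multiplicative character of `𝔽_p` of exact order `r` (it exists since
`r ∣ p - 1`). A nonzero `u` is an `r`-th power iff `χ u = 1`, and `∑_{j<r} χ^j u` is `r` or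
`0` according to whether `χ u = 1`. Dividing the discriminant condition by `γ` and summing over
`(a, b)`, the term `j = 0` gives the main term `p²`, the pairs where the discriminant vanishes
(at most `2p` of them) contribute `O(rp)`, and each `j ≠ 0` contributes a character sum
`∑_{a,b} ψ(A a³ + k b²)` with `ψ = χ^j ≠ 1`. For `a ≠ 0` the inner sum over `b` is, after
counting square roots with the quadratic character `η`, a multiple of the Jacobi sum `J(η, ψ)`,
of absolute value at most `√p`; so the whole sum is at most `p + p√p`.
-/

open Finset

lemma Real.rpow_three_halves {x : ℝ} (hx : 0 ≤ x) : x ^ (3 / 2 : ℝ) = x * √x := by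
  rw [show (3 / 2 : ℝ) = 1 + 1 / 2 by norm_num, Real.rpow_add' hx (by norm_num), Real.rpow_one,
    Real.sqrt_eq_rpow]

lemma abs_sub_div_le_of_abs_mul_sub_le {n N Q E : ℝ} (hn : 0 < n) (h : |n * N - Q| ≤ n * E) :
    |N - Q / n| ≤ E := by
  rwa [show N - Q / n = (n * N - Q) / n by field_simp, abs_div, abs_of_pos hn, div_le_iff₀' hn]

lemma ZMod.natCast_ne_zero_of_dvd_pow {p d m k : ℕ} (hp : p.Prime) (hpd : ¬ p ∣ d)
    (hm : m ∣ d ^ k) : (m : ZMod p) ≠ 0 := by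
  rw [Ne, ZMod.natCast_eq_zero_iff]
  exact fun hpm ↦ hpd (hp.dvd_of_dvd_pow (hpm.trans hm))

lemma card_subtype_exists_eq_mul_pow {X F : Type*} [Fintype X] [Field F] [Fintype F]
    [DecidableEq F] (f : X → F) {γ : F} (hγ : γ ≠ 0) (n : ℕ) :
    Nat.card {x // ∃ c, f x = γ * c ^ n} = #{x | ∃ c, c ^ n = γ⁻¹ * f x} := by
  rw [Nat.card_eq_fintype_card, Fintype.card_subtype]
  exact congrArg card (filter_congr fun x _ ↦
    exists_congr fun c ↦ by rw [eq_inv_mul_iff_mul_eq₀ hγ, eq_comm])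

namespace MulChar

lemma norm_apply_le_one {M : Type*} [CommMonoid M] [Finite Mˣ] (χ : MulChar M ℂ) (a : M) :
    ‖χ a‖ ≤ 1 := by
  by_cases ha : IsUnit a
  · obtain ⟨u, rfl⟩ := ha
    have hpow : χ u ^ Nat.card Mˣ = 1 := by
      rw [← map_pow, ← Units.val_pow_eq_pow_val, pow_card_eq_one', Units.val_one, map_one]
    exact (Complex.norm_eq_one_of_pow_eq_one hpow Nat.card_pos.ne').le
  · simp [χ.map_nonunit ha]

lemma sum_range_orderOf_pow_apply {M R : Type*} [CommMonoid M] [CommRing R] [IsDomain R]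
    [DecidableEq R] (χ : MulChar M R) (u : M) :
    ∑ j ∈ range (orderOf χ), (χ ^ j) u = if χ u = 1 then (orderOf χ : R) else 0 := by
  by_cases hu : IsUnit u
  · obtain ⟨v, rfl⟩ := hu
    simp_rw [pow_apply_coe]
    split_ifs with h1
    · simp [h1]
    · have hgeom := geom_sum_mul (χ v) (orderOf χ)
      rw [← pow_apply_coe, pow_orderOf_eq_one, one_apply_coe, sub_self] at hgeom
      exact (mul_eq_zero.mp hgeom).resolve_right (sub_ne_zero.mpr h1)
  · simp [map_nonunit _ hu]

lemma sum_one_apply {F R X : Type*} [Field F] [DecidableEq F] [CommRing R] [Fintype X]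
    (f : X → F) :
    ∑ x, (1 : MulChar F R) (f x) = Fintype.card X - #{x | f x = 0} := by
  rw [card_filter, Fintype.card_eq_sum_ones, Nat.cast_sum, Nat.cast_sum, ← sum_sub_distrib]
  refine sum_congr rfl fun x _ ↦ ?_
  by_cases hx : f x = 0
  · simp [hx]
  · simp [hx, one_apply (Ne.isUnit hx)]

variable {F : Type*} [Field F] [Fintype F]

lemma apply_eq_one_iff_exists_pow_eq {R : Type*} [CommRing R] (χ : MulChar F R) {u : F}
    (hu : u ≠ 0) :
    χ u = 1 ↔ ∃ c, c ^ orderOf χ = u := by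
  obtain ⟨g, hg⟩ := IsCyclic.exists_monoid_generator (α := Fˣ)
  have hg' : ∀ x, x ∈ Subgroup.zpowers g := fun x ↦
    (isOfFinOrder_of_finite g).mem_powers_iff_mem_zpowers.mp (hg x)
  have horder : orderOf (χ g) = orderOf χ := by
    refine orderOf_eq_orderOf_iff.mpr fun n ↦ ?_
    rw [MulChar.eq_iff hg' (χ ^ n) 1, pow_apply_coe, one_apply_coe]
  obtain ⟨k, hk⟩ := Submonoid.mem_powers_iff _ _ |>.mp (hg (Units.mk0 u hu))
  have hu' : u = ((g ^ k : Fˣ) : F) := by rw [hk, Units.val_mk0]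
  constructor
  · intro h1
    have hdvd : orderOf χ ∣ k := by
      rw [← horder]
      refine orderOf_dvd_of_pow_eq_one ?_
      rw [← map_pow, ← Units.val_pow_eq_pow_val, ← hu', h1]
    obtain ⟨m, rfl⟩ := hdvd
    refine ⟨((g ^ m : Fˣ) : F), ?_⟩
    rw [hu', ← Units.val_pow_eq_pow_val, ← pow_mul, mul_comm]
  · rintro ⟨c, rfl⟩
    have hc : c ≠ 0 := by rintro rfl; exact hu (zero_pow χ.orderOf_pos.ne')
    obtain ⟨v, rfl⟩ := hc.isUnit
    rw [map_pow, ← pow_apply_coe, pow_orderOf_eq_one, one_apply_coe]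

variable [DecidableEq F] {X : Type*} [Fintype X]

lemma orderOf_mul_card_exists_pow_eq {R : Type*} [CommRing R] [IsDomain R] [DecidableEq R]
    (χ : MulChar F R) (f : X → F) :
    (orderOf χ : R) * #{x | ∃ c, c ^ orderOf χ = f x} =
      orderOf χ * #{x | f x = 0} + ∑ j ∈ range (orderOf χ), ∑ x, (χ ^ j) (f x) := by
  have hpoint : ∀ u : F, (orderOf χ : R) * (if ∃ c, c ^ orderOf χ = u then 1 else 0) =
      orderOf χ * (if u = 0 then 1 else 0) + ∑ j ∈ range (orderOf χ), (χ ^ j) u := by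
    intro u
    rw [sum_range_orderOf_pow_apply]
    by_cases hu : u = 0
    · simp [hu, χ.orderOf_pos.ne']
    · simp only [← apply_eq_one_iff_exists_pow_eq χ hu, hu, if_false]
      split_ifs <;> simp
  simp only [card_filter, Nat.cast_sum, Nat.cast_ite, Nat.cast_one, Nat.cast_zero, mul_sum,
    hpoint, sum_add_distrib]
  rw [sum_comm]

lemma abs_orderOf_mul_card_exists_pow_eq_sub_card_le (χ : MulChar F ℂ) (f : X → F) {B : ℝ}
    (hB : ∀ j, 0 < j → j < orderOf χ → ‖∑ x, (χ ^ j) (f x)‖ ≤ B) :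
    |(orderOf χ : ℝ) * #{x | ∃ c, c ^ orderOf χ = f x} - Fintype.card X| ≤
      (orderOf χ - 1) * (#{x | f x = 0} + B) := by
  set n := orderOf χ
  have hn : 1 ≤ n := χ.orderOf_pos
  have hn' : (0 : ℝ) ≤ n - 1 := sub_nonneg.mpr (mod_cast hn)
  have hcount := orderOf_mul_card_exists_pow_eq χ f
  rw [range_eq_Ico, sum_eq_sum_Ico_succ_bot hn, pow_zero, sum_one_apply] at hcount
  have hdiff : ((n * #{x | ∃ c, c ^ n = f x} - Fintype.card X : ℝ) : ℂ) =
      ((n - 1) * #{x | f x = 0} : ℝ) + ∑ j ∈ Ico 1 n, ∑ x, (χ ^ j) (f x) := by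
    push_cast
    rw [hcount]
    ring
  rw [← Real.norm_eq_abs, ← Complex.norm_real, hdiff]
  calc _ ≤ ‖(((n - 1) * #{x | f x = 0} : ℝ) : ℂ)‖ +
        ∑ j ∈ Ico 1 n, ‖∑ x, (χ ^ j) (f x)‖ :=
        norm_add_le_of_le le_rfl (norm_sum_le _ _)
    _ ≤ (n - 1) * #{x | f x = 0} + ∑ _j ∈ Ico 1 n, B := by
        gcongr with j hj
        · rw [Complex.norm_real, Real.norm_of_nonneg (by positivity)]
        · exact hB j (mem_Ico.mp hj).1 (mem_Ico.mp hj).2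
    _ = (n - 1) * (#{x | f x = 0} + B) := by
        rw [sum_const, Nat.card_Ico, nsmul_eq_mul, Nat.cast_sub hn]
        ring

end MulChar

noncomputable def complexQuadraticChar (F : Type*) [Field F] [Fintype F] [DecidableEq F] :
    MulChar F ℂ :=
  (quadraticChar F).ringHomComp (Int.castRingHom ℂ)

variable {F : Type*} [Field F] [Fintype F]

lemma norm_jacobiSum_le {χ ψ : MulChar F ℂ} (hχ : χ ≠ 1) (hψ : ψ ≠ 1) :
    ‖jacobiSum χ ψ‖ ≤ √(Fintype.card F) := by
  have hq : 1 ≤ √(Fintype.card F) := Real.one_le_sqrt.mpr (mod_cast Fintype.card_pos)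
  by_cases hχψ : χ * ψ = 1
  · rw [eq_inv_of_mul_eq_one_right hχψ, jacobiSum_nontrivial_inv hχ, norm_neg]
    exact (χ.norm_apply_le_one _).trans hq
  · have hchar : ringChar ℂ ≠ ringChar F := by
      rw [ringChar.eq_zero]
      exact (CharP.char_ne_zero_of_finite F (ringChar F)).symm
    have hmul := jacobiSum_mul_jacobiSum_inv hchar hχ hψ hχψ
    have hstar : jacobiSum χ⁻¹ ψ⁻¹ = star (jacobiSum χ ψ) := by
      simp only [jacobiSum, star_sum, star_mul', MulChar.star_apply']
    rw [hstar, Complex.star_def, Complex.mul_conj, ← Complex.ofReal_natCast, Complex.ofReal_inj,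
      Complex.normSq_eq_norm_sq] at hmul
    rw [← hmul, Real.sqrt_sq (norm_nonneg _)]

variable [DecidableEq F]

lemma complexQuadraticChar_ne_one (hF : ringChar F ≠ 2) : complexQuadraticChar F ≠ 1 :=
  (MulChar.ringHomComp_ne_one_iff Int.cast_injective).mpr (quadraticChar_ne_one hF)

lemma sum_apply_sq (hF : ringChar F ≠ 2) (f : F → ℂ) :
    ∑ b, f (b ^ 2) = ∑ t, (1 + complexQuadraticChar F t) * f t := by
  rw [← sum_fiberwise' univ (· ^ 2) f]
  refine sum_congr rfl fun t _ ↦ ?_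
  rw [sum_const, nsmul_eq_mul, add_comm]
  congr 1
  have hcard := congrArg (Int.cast : ℤ → ℂ) (quadraticChar_card_sqrts hF t)
  rw [Set.toFinset_ofPred] at hcard
  push_cast at hcard
  rw [hcard]
  rfl

lemma sum_apply_add_mul_sq (hF : ringChar F ≠ 2) {ψ : MulChar F ℂ} (hψ : ψ ≠ 1) {u k : F}
    (hu : u ≠ 0) (hk : k ≠ 0) :
    ∑ b, ψ (u + k * b ^ 2) =
      complexQuadraticChar F (-u / k) * ψ u * jacobiSum (complexQuadraticChar F) ψ := by
  set η := complexQuadraticChar F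
  have hlin : ∑ t, ψ (u + k * t) = 0 := by
    rw [Fintype.sum_bijective (fun t ↦ u + k * t)
      ((AddGroup.addLeft_bijective u).comp (mulLeft_bijective₀ k hk)) _ ψ fun _ ↦ rfl]
    exact MulChar.sum_eq_zero_of_ne_one hψ
  have htwist : ∑ t, η t * ψ (u + k * t) = η (-u / k) * ψ u * jacobiSum η ψ := by
    rw [jacobiSum, mul_sum, ← Fintype.sum_bijective (fun x ↦ -u / k * x)
      (mulLeft_bijective₀ _ (div_ne_zero (neg_ne_zero.mpr hu) hk)) _ _ fun _ ↦ rfl]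
    refine sum_congr rfl fun x _ ↦ ?_
    have harg : u + k * (-u / k * x) = u * (1 - x) := by field_simp; ring
    rw [harg, map_mul, map_mul]
    ring
  rw [sum_apply_sq hF fun t ↦ ψ (u + k * t)]
  simp only [add_mul, one_mul, sum_add_distrib, hlin, zero_add]
  exact htwist

lemma norm_sum_apply_add_mul_sq_le (hF : ringChar F ≠ 2) {ψ : MulChar F ℂ} (hψ : ψ ≠ 1)
    {u k : F} (hu : u ≠ 0) (hk : k ≠ 0) :
    ‖∑ b, ψ (u + k * b ^ 2)‖ ≤ √(Fintype.card F) := by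
  rw [sum_apply_add_mul_sq hF hψ hu hk, norm_mul, norm_mul]
  calc _ ≤ 1 * 1 * √(Fintype.card F) := by
        gcongr
        · exact MulChar.norm_apply_le_one _ _
        · exact MulChar.norm_apply_le_one _ _
        · exact norm_jacobiSum_le (complexQuadraticChar_ne_one hF) hψ
    _ = _ := by ring

lemma norm_sum_sum_apply_add_mul_sq_le (hF : ringChar F ≠ 2) {ψ : MulChar F ℂ} (hψ : ψ ≠ 1)
    {k : F} (hk : k ≠ 0) (g : F → F) :
    ‖∑ a, ∑ b, ψ (g a + k * b ^ 2)‖ ≤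
      Fintype.card F * #{a | g a = 0} + Fintype.card F * √(Fintype.card F) := by
  have hinner : ∀ a, ‖∑ b, ψ (g a + k * b ^ 2)‖ ≤
      (if g a = 0 then (Fintype.card F : ℝ) else 0) + √(Fintype.card F) := by
    intro a
    by_cases ha : g a = 0
    · calc _ ≤ ∑ _b : F, (1 : ℝ) := norm_sum_le_of_le _ fun b _ ↦ ψ.norm_apply_le_one _
        _ ≤ _ := by simp [ha]
    · simpa [ha] using norm_sum_apply_add_mul_sq_le hF hψ ha hk
  refine (norm_sum_le_of_le _ fun a _ ↦ hinner a).trans_eq ?_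
  simp [sum_add_distrib, sum_ite, mul_comm]

lemma card_add_mul_sq_eq_zero_le {k : F} (hk : k ≠ 0) (g : F → F) :
    #{x : F × F | g x.1 + k * x.2 ^ 2 = 0} ≤ 2 * Fintype.card F := by
  rw [card_eq_sum_card_fiberwise (f := Prod.fst) (t := univ) fun _ _ ↦ mem_univ _]
  refine (sum_le_sum (g := fun _ ↦ 2) fun a _ ↦ ?_).trans_eq (by simp [mul_comm])
  refine (card_le_card (t := {a} ×ˢ (Polynomial.nthRoots 2 (-g a / k)).toFinset)
    fun x hx ↦ ?_).trans ?_
  · simp only [mem_filter, mem_univ, true_and] at hx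
    obtain ⟨hx, rfl⟩ := hx
    simp only [mem_product, mem_singleton, Multiset.mem_toFinset, true_and,
      Polynomial.mem_nthRoots two_pos]
    field_simp
    linear_combination hx
  · rw [card_product, card_singleton, one_mul]
    exact (Multiset.toFinset_card_le _).trans (Polynomial.card_nthRoots 2 _)

lemma abs_orderOf_mul_card_exists_pow_eq_mul_cube_add_mul_sq_sub_le (hF : ringChar F ≠ 2)
    (χ : MulChar F ℂ) {A k : F} (hA : A ≠ 0) (hk : k ≠ 0) :
    |(orderOf χ : ℝ) * #{x : F × F | ∃ c, c ^ orderOf χ = A * x.1 ^ 3 + k * x.2 ^ 2} -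
      Fintype.card F ^ 2| ≤ orderOf χ * (4 * (Fintype.card F * √(Fintype.card F))) := by
  set q := Fintype.card F
  set n := orderOf χ
  have hcubic_zeros : #{a : F | A * a ^ 3 = 0} = 1 := by simp [hA, filter_eq']
  have key := MulChar.abs_orderOf_mul_card_exists_pow_eq_sub_card_le χ
    (fun x : F × F ↦ A * x.1 ^ 3 + k * x.2 ^ 2) (B := q * 1 + q * √q) fun j hj0 hj ↦ by
      have hsum := norm_sum_sum_apply_add_mul_sq_le hF (pow_ne_one_of_lt_orderOf hj0.ne' hj) hk
        (A * · ^ 3)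
      rw [hcubic_zeros, ← Fintype.sum_prod_type'] at hsum
      exact_mod_cast hsum
  have hzeros : (#{x : F × F | A * x.1 ^ 3 + k * x.2 ^ 2 = 0} : ℝ) ≤ 2 * q :=
    mod_cast card_add_mul_sq_eq_zero_le hk (A * · ^ 3)
  have hn : (1 : ℝ) ≤ n := mod_cast χ.orderOf_pos
  have hq : (q : ℝ) ≤ q * √q :=
    le_mul_of_one_le_right q.cast_nonneg (Real.one_le_sqrt.mpr (mod_cast Fintype.card_pos))
  rw [Fintype.card_prod, Nat.cast_mul, ← sq] at key
  calc _ ≤ (n - 1) * (#{x : F × F | A * x.1 ^ 3 + k * x.2 ^ 2 = 0} + (q * 1 + q * √q)) := key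
    _ ≤ (n - 1) * (4 * (q * √q)) := by gcongr; linarith
    _ ≤ n * (4 * (q * √q)) := by gcongr; linarith

theorem statement11_general (r : ℕ) :
    ∃ C : ℝ, 0 < C ∧ ∀ p : ℕ, p.Prime → ¬ p ∣ 6 → p ≡ 1 [MOD r] →
      ∀ γ : (ZMod p)ˣ,
        |(Nat.card {ab : ZMod p × ZMod p // ∃ c : ZMod p,
            -16 * (4 * ab.1 ^ 3 + 27 * ab.2 ^ 2) = (γ : ZMod p) * c ^ r} : ℝ) -
          (p : ℝ) ^ 2 / (r : ℝ)| ≤ C * (p : ℝ) ^ ((3 : ℝ) / 2) := by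
  refine ⟨4, by norm_num, fun p hp hp6 hmod γ ↦ ?_⟩
  have := Fact.mk hp
  have hdvd : r ∣ Fintype.card (ZMod p) - 1 := by
    rw [ZMod.card]; exact (Nat.modEq_iff_dvd' hp.one_lt.le).mp hmod.symm
  have hr : r ≠ 0 := by
    rintro rfl; rw [ZMod.card, zero_dvd_iff] at hdvd; have := hp.one_lt; omega
  obtain ⟨χ, rfl⟩ :=
    MulChar.exists_mulChar_orderOf (ZMod p) hdvd (Complex.isPrimitiveRoot_exp r hr)
  have hF : ringChar (ZMod p) ≠ 2 := by
    rw [ZMod.ringChar_zmod_n]; rintro rfl; exact hp6 (by norm_num)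
  have hunit : ∀ m k : ℕ, m ∣ 6 ^ k → (m : ZMod p) ≠ 0 := fun _ _ ↦
    ZMod.natCast_ne_zero_of_dvd_pow hp hp6
  have he : (γ : ZMod p)⁻¹ * -16 ≠ 0 :=
    mul_ne_zero (inv_ne_zero γ.ne_zero) (neg_ne_zero.mpr (mod_cast hunit 16 4 (by norm_num)))
  rw [card_subtype_exists_eq_mul_pow (fun ab : ZMod p × ZMod p ↦
    -16 * (4 * ab.1 ^ 3 + 27 * ab.2 ^ 2)) γ.ne_zero]
  simp only [mul_add, ← mul_assoc]
  rw [Real.rpow_three_halves p.cast_nonneg]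
  refine abs_sub_div_le_of_abs_mul_sub_le (mod_cast χ.orderOf_pos) ?_
  have hbound := abs_orderOf_mul_card_exists_pow_eq_mul_cube_add_mul_sq_sub_le hF χ
    (A := (γ : ZMod p)⁻¹ * -16 * 4) (k := (γ : ZMod p)⁻¹ * -16 * 27)
    (mul_ne_zero he (mod_cast hunit 4 2 (by norm_num)))
    (mul_ne_zero he (mod_cast hunit 27 3 (by norm_num)))
  rwa [ZMod.card] at hbound

/-- For every `r ≥ 1` there is a constant `C > 0` such that for every prime
`p ∤ 6` with `p ≡ 1 (mod r)` and every `γ ∈ 𝔽_p^×`, the number of pairs `(a,b) ∈ 𝔽_p²` with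
`-16(4a³+27b²) = γ·c^r` for some `c ∈ 𝔽_p` equals `p²/r + O(p^{3/2})`. -/
theorem statement11 (r : ℕ) (hr : 1 ≤ r) :
    ∃ C : ℝ, 0 < C ∧ ∀ p : ℕ, p.Prime → ¬ p ∣ 6 → p ≡ 1 [MOD r] →
      ∀ γ : (ZMod p)ˣ,
        |(Nat.card {ab : ZMod p × ZMod p // ∃ c : ZMod p,
            -16 * (4 * ab.1 ^ 3 + 27 * ab.2 ^ 2) = (γ : ZMod p) * c ^ r} : ℝ) -
          (p : ℝ) ^ 2 / (r : ℝ)| ≤ C * (p : ℝ) ^ ((3 : ℝ) / 2) :=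
  statement11_general r
end

section
/- Let ℓ be a prime and n ≥ 2 an integer, and let H be a subgroup of SL₂(ℤ/ℓⁿℤ). If the image of H under the entrywise reduction homomorphism SL₂(ℤ/ℓⁿℤ) → SL₂(ℤ/ℓ²ℤ) is all of SL₂(ℤ/ℓ²ℤ), then H = SL₂(ℤ/ℓⁿℤ). -/
/-!
Lift surjectivity one level at a time. Let `k ≥ 2` and let `H ≤ SL₂(ℤ/ℓ^{k+1})` surject onto
`SL₂(ℤ/ℓ^k)`; it suffices that `H` contains the kernel of reduction. A kernel element is
`u = 1 + ℓ^k A` with `ℓ ∣ tr A` (read off from `det u = 1`). Then `1 + ℓ^{k-1} A` has determinant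
`1` mod `ℓ^k`, so it is the reduction of some `h ∈ H`, and `h^ℓ` only depends on `h` mod `ℓ^k`.
By the binomial theorem `(1 + ℓ^{k-1} A)^ℓ = 1 + ℓ^k A = u` mod `ℓ^{k+1}`, unless `ℓ = 2` and
`k = 2`. In that case `(1 + 2A)² = (1 + 4A)(1 + 4 det A)` mod `8`, and the missing scalar `5` is the
product of the squares of `1 + 2E₁₂`, `1 + 2E₂₁` and `1 + 2(E₁₂ + E₂₁)`.
-/

open Matrix Finset
open scoped MatrixGroups

lemma nsmul_eq_zero_of_natCast_eq_zero {A : Type*} [NonAssocSemiring A] {N n : ℕ}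
    (hN : (N : A) = 0) (h : N ∣ n) (a : A) : n • a = 0 := by
  obtain ⟨d, rfl⟩ := h
  rw [nsmul_eq_mul, Nat.cast_mul, hN, zero_mul, zero_mul]

lemma add_pow_eq_pow_add_nsmul {A : Type*} [Semiring A] {x e : A} (hxe : x * e = e)
    (hex : e * x = e) (hee : e * e = 0) (m : ℕ) : (x + e) ^ m = x ^ m + m • e := by
  have hpow (j : ℕ) : x ^ j * e = e := by
    induction j with
    | zero => rw [pow_zero, one_mul]
    | succ j ih => rw [pow_succ, mul_assoc, hxe, ih]
  induction m with
  | zero => simp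
  | succ m ih =>
    rw [pow_succ, ih, add_mul, mul_add, mul_add, hpow, ← pow_succ, smul_mul_assoc, smul_mul_assoc,
      hex, hee, smul_zero, add_zero, succ_nsmul]
    abel

lemma Nat.Prime.pow_succ_dvd_pow_mul_choose {ℓ k m : ℕ} (hℓ : ℓ.Prime) (hk : 2 ≤ k)
    (hℓk : ℓ ≠ 2 ∨ 3 ≤ k) (hm : 2 ≤ m) : ℓ ^ (k + 1) ∣ ℓ ^ ((k - 1) * m) * ℓ.choose m := by
  obtain rfl | hm : m = 2 ∨ 3 ≤ m := by omega
  · obtain hℓ2 | hk : ℓ ≠ 2 ∨ 3 ≤ k := hℓk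
    · have hchoose : ℓ ∣ ℓ.choose 2 :=
        hℓ.dvd_choose_self two_ne_zero (lt_of_le_of_ne hℓ.two_le (Ne.symm hℓ2))
      exact (pow_dvd_pow ℓ (by omega : k + 1 ≤ (k - 1) * 2 + 1)).trans
        (by rw [pow_succ]; exact mul_dvd_mul_left _ hchoose)
    · exact (pow_dvd_pow ℓ (by omega)).mul_right _
  · refine (pow_dvd_pow ℓ ?_).mul_right _
    calc k + 1 ≤ (k - 1) * 3 := by omega
      _ ≤ (k - 1) * m := Nat.mul_le_mul_left _ hm

theorem one_add_nsmul_pow_prime {A : Type*} [Semiring A] {ℓ k : ℕ} (hℓ : ℓ.Prime) (hk : 2 ≤ k)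
    (hℓk : ℓ ≠ 2 ∨ 3 ≤ k) (hA : ((ℓ ^ (k + 1) : ℕ) : A) = 0) (c : A) :
    (1 + ℓ ^ (k - 1) • c) ^ ℓ = 1 + ℓ ^ k • c := by
  rw [add_comm, (Commute.one_right _).add_pow, sum_eq_add_of_mem 0 1 (by simp) (by simp [hℓ.pos])
    zero_ne_one]
  · simp only [pow_zero, pow_one, one_pow, mul_one, Nat.choose_zero_right, Nat.choose_one_right,
      Nat.cast_one]
    rw [← nsmul_eq_mul', smul_smul, ← pow_succ', Nat.sub_add_cancel (by omega : 1 ≤ k)]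
  · rintro m - ⟨hm0, hm1⟩
    rw [one_pow, mul_one, smul_pow, smul_mul_assoc, ← nsmul_eq_mul', smul_smul, ← pow_mul]
    exact nsmul_eq_zero_of_natCast_eq_zero hA
      (hℓ.pow_succ_dvd_pow_mul_choose hk hℓk (by omega)) _

lemma ZMod.exists_eq_mul_of_castHom_eq_zero {a b : ℕ} (h : a ∣ b) {x : ZMod b}
    (hx : ZMod.castHom h (ZMod a) x = 0) : ∃ y, x = a * y := by
  rw [ZMod.castHom_apply, ← ZMod.intCast_cast, ZMod.intCast_zmod_eq_zero_iff_dvd] at hx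
  obtain ⟨y, hy⟩ := hx
  exact ⟨y, by rw [← ZMod.intCast_zmod_cast x, hy]; push_cast; rfl⟩

lemma ZMod.natCast_dvd_of_pow_nsmul_eq_zero {ℓ k : ℕ} (hℓ : ℓ ≠ 0) {s : ZMod (ℓ ^ (k + 1))}
    (hs : ℓ ^ k • s = 0) : (ℓ : ZMod (ℓ ^ (k + 1))) ∣ s := by
  rw [← ZMod.intCast_zmod_cast s, nsmul_eq_mul, ← Int.cast_natCast, ← Int.cast_mul,
    ZMod.intCast_zmod_eq_zero_iff_dvd, Nat.cast_pow, Nat.cast_pow, pow_succ,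
    mul_dvd_mul_iff_left (pow_ne_zero _ (by exact_mod_cast hℓ))] at hs
  obtain ⟨t, ht⟩ := hs
  exact ⟨t, by rw [← ZMod.intCast_zmod_cast s, ht]; push_cast; rfl⟩

lemma Matrix.exists_eq_add_nsmul_of_map_castHom_eq {m n : Type*} {a b : ℕ} (h : a ∣ b)
    {X Y : Matrix m n (ZMod b)}
    (hXY : X.map (ZMod.castHom h (ZMod a)) = Y.map (ZMod.castHom h (ZMod a))) :
    ∃ B, X = Y + a • B := by
  have hentry (i : m) (j : n) : ∃ y, X i j - Y i j = a * y :=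
    ZMod.exists_eq_mul_of_castHom_eq_zero h (by rw [map_sub, sub_eq_zero]; exact congr_fun₂ hXY i j)
  choose B hB using hentry
  exact ⟨Matrix.of B, by ext i j; simp [← hB, nsmul_eq_mul]⟩

lemma Matrix.det_one_add_nsmul_fin_two {R : Type*} [CommRing R] (n : ℕ)
    (A : Matrix (Fin 2) (Fin 2) R) : (1 + n • A).det = 1 + n • A.trace + n ^ 2 • A.det := by
  rw [det_fin_two, det_fin_two, trace_fin_two]
  simp only [add_apply, smul_apply]
  simp only [one_apply_eq, one_apply_ne, ne_eq, zero_ne_one, one_ne_zero, not_false_eq_true,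
    Fin.isValue, zero_add, nsmul_eq_mul, Nat.cast_pow]
  ring

lemma Matrix.one_add_two_nsmul_sq_of_two_dvd_trace {A : Matrix (Fin 2) (Fin 2) (ZMod 8)}
    (hA : (2 : ZMod 8) ∣ A.trace) : (1 + 2 • A) ^ 2 = (1 + 4 • A) * (1 + (4 * A.det) • 1) := by
  obtain ⟨t, ht⟩ := hA
  rw [trace_fin_two] at ht
  ext i j
  fin_cases i <;> fin_cases j <;>
    simp only [Fin.zero_eta, Fin.mk_one, Fin.isValue, sq, mul_apply, add_apply, smul_apply,
      Fin.sum_univ_two, one_apply_eq, one_apply_ne, ne_eq, zero_ne_one, one_ne_zero,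
      not_false_eq_true, zero_add, Algebra.mul_smul_comm, Algebra.smul_mul_assoc, det_fin_two,
      smul_eq_mul, mul_one, mul_zero, add_zero]
  all_goals
    rw [show A 1 1 = 2 * t - A 0 0 by rw [← ht]; ring, ← sub_eq_zero]
    ring_nf
    reduce_mod_char

namespace Matrix.SpecialLinearGroup

lemma map_id {n R : Type*} [Fintype n] [DecidableEq n] [CommRing R] :
    map (RingHom.id R) = MonoidHom.id (SpecialLinearGroup n R) := by
  ext; simp

lemma map_comp {n R S T : Type*} [Fintype n] [DecidableEq n] [CommRing R] [CommRing S]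
    [CommRing T] (f : R →+* S) (g : S →+* T) :
    (map g).comp (map f) = (map (g.comp f) : SpecialLinearGroup n R →* SpecialLinearGroup n T) := by
  ext; simp

section Lifting

variable {ℓ k : ℕ}

lemma exists_coe_eq_one_add_nsmul_of_mem_ker (hℓ : ℓ ≠ 0) (hk : 1 ≤ k)
    {u : SL(2, ZMod (ℓ ^ (k + 1)))}
    (hu : u ∈ (map (ZMod.castHom (pow_dvd_pow ℓ k.le_succ) (ZMod (ℓ ^ k)))).ker) :
    ∃ A, (u : Matrix (Fin 2) (Fin 2) (ZMod (ℓ ^ (k + 1)))) = 1 + ℓ ^ k • A ∧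
      (ℓ : ZMod (ℓ ^ (k + 1))) ∣ A.trace := by
  set f := ZMod.castHom (pow_dvd_pow ℓ k.le_succ) (ZMod (ℓ ^ k))
  have hu' : (u : Matrix (Fin 2) (Fin 2) _).map f = (1 : Matrix (Fin 2) (Fin 2) _).map f := by
    simpa using Subtype.ext_iff.mp hu
  obtain ⟨A, hA⟩ := exists_eq_add_nsmul_of_map_castHom_eq _ hu'
  refine ⟨A, hA, ZMod.natCast_dvd_of_pow_nsmul_eq_zero hℓ ?_⟩
  have hdet := u.2
  rwa [hA, det_one_add_nsmul_fin_two, ← pow_mul, nsmul_eq_zero_of_natCast_eq_zero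
    (ZMod.natCast_self _) (pow_dvd_pow ℓ (by omega : k + 1 ≤ k * 2)), add_zero,
    add_eq_left] at hdet

lemma exists_mem_coe_pow_eq_one_add_nsmul_pow (hk : 2 ≤ k)
    {H : Subgroup SL(2, ZMod (ℓ ^ (k + 1)))}
    (hH : H.map (map (ZMod.castHom (pow_dvd_pow ℓ k.le_succ) (ZMod (ℓ ^ k)))) = ⊤)
    {C : Matrix (Fin 2) (Fin 2) (ZMod (ℓ ^ (k + 1)))} (hC : (ℓ : ZMod (ℓ ^ (k + 1))) ∣ C.trace) :
    ∃ h ∈ H, (h : Matrix (Fin 2) (Fin 2) (ZMod (ℓ ^ (k + 1)))) ^ ℓ = (1 + ℓ ^ (k - 1) • C) ^ ℓ := by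
  set f := ZMod.castHom (pow_dvd_pow ℓ k.le_succ) (ZMod (ℓ ^ k))
  have hdet : (f.mapMatrix (1 + ℓ ^ (k - 1) • C)).det = 1 := by
    obtain ⟨t, ht⟩ := hC
    obtain ⟨j, rfl⟩ : ∃ j, k = j + 2 := ⟨k - 2, by omega⟩
    have hdet : (1 + ℓ ^ (j + 1) • C).det = 1 + ℓ ^ (j + 2) • (t + ℓ ^ j • C.det) := by
      rw [det_one_add_nsmul_fin_two, ht]
      simp only [nsmul_eq_mul, Nat.cast_pow]
      ring
    rw [← RingHom.map_det, show j + 2 - 1 = j + 1 from rfl, hdet, map_add, map_one, map_nsmul,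
      nsmul_eq_zero_of_natCast_eq_zero (ZMod.natCast_self _) dvd_rfl, add_zero]
  let M : SL(2, ZMod (ℓ ^ k)) := ⟨_, hdet⟩
  have hM : M ∈ H.map (map f) := hH ▸ Subgroup.mem_top M
  obtain ⟨h, hhH, hh⟩ := Subgroup.mem_map.mp hM
  obtain ⟨B, hB⟩ := exists_eq_add_nsmul_of_map_castHom_eq _ (Subtype.ext_iff.mp hh)
  have hzero {n : ℕ} (hn : k + 1 ≤ n) (X : Matrix (Fin 2) (Fin 2) (ZMod (ℓ ^ (k + 1)))) :
      ℓ ^ n • X = 0 :=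
    nsmul_eq_zero_of_natCast_eq_zero (CharP.cast_eq_zero _ _) (pow_dvd_pow ℓ hn) X
  have hxe : (1 + ℓ ^ (k - 1) • C) * ℓ ^ k • B = ℓ ^ k • B := by
    rw [add_mul, one_mul, smul_mul_smul_comm, ← pow_add, hzero (n := k - 1 + k) (by omega),
      add_zero]
  have hex : ℓ ^ k • B * (1 + ℓ ^ (k - 1) • C) = ℓ ^ k • B := by
    rw [mul_add, mul_one, smul_mul_smul_comm, ← pow_add, hzero (n := k + (k - 1)) (by omega),
      add_zero]
  have hee : ℓ ^ k • B * ℓ ^ k • B = 0 := by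
    rw [smul_mul_smul_comm, ← pow_add, hzero (by omega)]
  refine ⟨h, hhH, ?_⟩
  rw [hB, add_pow_eq_pow_add_nsmul hxe hex hee, smul_smul, ← pow_succ', hzero le_rfl, add_zero]

theorem ker_map_castHom_le_of_ne_two_or (hℓ : ℓ.Prime) (hk : 2 ≤ k) (hℓk : ℓ ≠ 2 ∨ 3 ≤ k)
    {H : Subgroup SL(2, ZMod (ℓ ^ (k + 1)))}
    (hH : H.map (map (ZMod.castHom (pow_dvd_pow ℓ k.le_succ) (ZMod (ℓ ^ k)))) = ⊤) :
    (map (ZMod.castHom (pow_dvd_pow ℓ k.le_succ) (ZMod (ℓ ^ k)))).ker ≤ H := by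
  intro u hu
  obtain ⟨A, hu, hA⟩ := exists_coe_eq_one_add_nsmul_of_mem_ker hℓ.ne_zero (by omega) hu
  obtain ⟨h, hhH, hh⟩ := exists_mem_coe_pow_eq_one_add_nsmul_pow hk hH hA
  rw [one_add_nsmul_pow_prime hℓ hk hℓk (CharP.cast_eq_zero _ _), ← hu, ← coe_pow] at hh
  rw [← Subtype.ext hh]
  exact pow_mem hhH ℓ

end Lifting

theorem ker_map_castHom_eight_le {H : Subgroup SL(2, ZMod 8)}
    (hH : H.map (map (ZMod.castHom (by norm_num : 4 ∣ 8) (ZMod 4))) = ⊤) :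
    (map (ZMod.castHom (by norm_num : 4 ∣ 8) (ZMod 4))).ker ≤ H := by
  intro u hu
  obtain ⟨A, hu, hA⟩ : ∃ A, (u : Matrix (Fin 2) (Fin 2) (ZMod 8)) = 1 + 4 • A ∧
      (2 : ZMod 8) ∣ A.trace :=
    exists_coe_eq_one_add_nsmul_of_mem_ker (ℓ := 2) (k := 2) two_ne_zero one_le_two hu
  have hsq {C : Matrix (Fin 2) (Fin 2) (ZMod 8)} (hC : (2 : ZMod 8) ∣ C.trace) :
      ∃ h ∈ H, (h : Matrix (Fin 2) (Fin 2) (ZMod 8)) ^ 2 = (1 + 2 • C) ^ 2 :=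
    exists_mem_coe_pow_eq_one_add_nsmul_pow (ℓ := 2) (k := 2) le_rfl hH hC
  obtain ⟨h, hhH, hh⟩ := hsq hA
  obtain ⟨v, hvH, hv⟩ : ∃ v ∈ H, (v : Matrix (Fin 2) (Fin 2) (ZMod 8)) = 1 + (4 * A.det) • 1 := by
    rcases (by decide : ∀ x : ZMod 8, 4 * x = 0 ∨ 4 * x = 4) A.det with hd | hd
    · exact ⟨1, one_mem H, by rw [hd, zero_smul, add_zero, coe_one]⟩
    obtain ⟨h₁, hh₁H, hh₁⟩ := hsq (C := !![0, 1; 0, 0]) (by simp [trace_fin_two])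
    obtain ⟨h₂, hh₂H, hh₂⟩ := hsq (C := !![0, 0; 1, 0]) (by simp [trace_fin_two])
    obtain ⟨h₃, hh₃H, hh₃⟩ := hsq (C := !![0, 1; 1, 0]) (by simp [trace_fin_two])
    refine ⟨h₁ ^ 2 * h₂ ^ 2 * h₃ ^ 2, ?_, ?_⟩
    · exact mul_mem (mul_mem (pow_mem hh₁H 2) (pow_mem hh₂H 2)) (pow_mem hh₃H 2)
    · rw [hd, coe_mul, coe_mul, coe_pow, coe_pow, coe_pow, hh₁, hh₂, hh₃]
      decide
  have hu' : u = h ^ 2 * v⁻¹ := by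
    rw [eq_mul_inv_iff_mul_eq]
    ext1
    rw [coe_mul, coe_pow, hh, hu, hv, one_add_two_nsmul_sq_of_two_dvd_trace hA]
  rw [hu']
  exact mul_mem (pow_mem hhH 2) (inv_mem hvH)

theorem eq_top_of_map_castHom_pow_succ_eq_top {ℓ k : ℕ} (hℓ : ℓ.Prime) (hk : 2 ≤ k)
    {H : Subgroup SL(2, ZMod (ℓ ^ (k + 1)))}
    (hH : H.map (map (ZMod.castHom (pow_dvd_pow ℓ k.le_succ) (ZMod (ℓ ^ k)))) = ⊤) : H = ⊤ := by
  have hker : (map (ZMod.castHom (pow_dvd_pow ℓ k.le_succ) (ZMod (ℓ ^ k)))).ker ≤ H := by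
    by_cases h22 : ℓ = 2 ∧ k = 2
    · obtain ⟨rfl, rfl⟩ := h22
      exact ker_map_castHom_eight_le hH
    · exact ker_map_castHom_le_of_ne_two_or hℓ hk (by omega) hH
  rw [← Subgroup.comap_map_eq_self hker, hH, Subgroup.comap_top]

end Matrix.SpecialLinearGroup

/-- For a prime `ℓ` and `n ≥ 2`, a subgroup of `SL₂(ℤ/ℓⁿℤ)` surjecting onto
`SL₂(ℤ/ℓ²ℤ)` is the whole group. -/
theorem statement14 (ℓ : ℕ) (hℓ : ℓ.Prime) (n : ℕ) (hn : 2 ≤ n)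
    (H : Subgroup (Matrix.SpecialLinearGroup (Fin 2) (ZMod (ℓ ^ n))))
    (hH : H.map (Matrix.SpecialLinearGroup.map
      (ZMod.castHom (pow_dvd_pow ℓ hn) (ZMod (ℓ ^ 2)))) = ⊤) :
    H = ⊤ := by
  induction n, hn using Nat.le_induction with
  | base => simpa [SpecialLinearGroup.map_id] using hH
  | succ k hk ih =>
    refine SpecialLinearGroup.eq_top_of_map_castHom_pow_succ_eq_top hℓ hk (ih _ ?_)
    rw [Subgroup.map_map, SpecialLinearGroup.map_comp, ZMod.castHom_comp]
    exact hH
end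

section
/- Let G₁, …, G_n be finite groups such that for all i ≠ j: (1) no nonabelian finite simple group is isomorphic both to a subquotient of G_i and to a subquotient of G_j (equivalently, the composition factors of G_i and G_j share no nonabelian simple group), and (2) gcd(|G_i^ab|, |G_j^ab|) = 1, where G^ab denotes the abelianization. If H is a subgroup of G₁ × ⋯ × G_n such that each projection pr_i : G₁ × ⋯ × G_n → G_i maps H onto G_i, then H = G₁ × ⋯ × G_n. -/
/-- `S` is a subquotient of `G`: it is the image of a surjective group homomorphism from a
subgroup `M` of `G` (equivalently, isomorphic to `M ⧸ N` for some `N ⊴ M ≤ G`). -/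
def IsSubquotient (S G : Type) [Group S] [Group G] : Prop :=
  ∃ (M : Subgroup G) (f : M →* S), Function.Surjective f

/-!
Induct on the number of factors, splitting `∏ Gᵢ = G₀ × ∏_{i>0} Gᵢ`. By induction `H` maps onto
both factors, so Goursat's lemma identifies `G₀ ⧸ N₀` with a quotient of `∏_{i>0} Gᵢ`, where
`N₀ × 1 = H ∩ (G₀ × 1)`. If `N₀ ≠ G₀`, this common quotient has a simple quotient `S`, and a simple
quotient of a finite product is already a quotient of one factor `Gⱼ`. A nonabelian `S` is then
excluded by the hypothesis on subquotients; an abelian `S` is a quotient of both abelianizations,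
so `|S|` divides two coprime numbers. Hence `G₀ × 1 ≤ H`, and with surjectivity onto the rest,
`H` is everything.
-/

open Function

universe u

lemma IsSubquotient.of_surjective {S G : Type} [Group S] [Group G] (f : G →* S)
    (hf : Surjective f) : IsSubquotient S G :=
  ⟨⊤, f.comp (⊤ : Subgroup G).subtype, fun s ↦
    let ⟨g, hg⟩ := hf s
    ⟨⟨g, Subgroup.mem_top g⟩, hg⟩⟩

lemma card_dvd_card_abelianization_of_surjective {G A : Type u} [Group G] [CommGroup A]
    (f : G →* A) (hf : Surjective f) : Nat.card A ∣ Nat.card (Abelianization G) :=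
  Subgroup.card_dvd_of_surjective (Abelianization.lift f) fun a ↦
    let ⟨g, hg⟩ := hf a
    ⟨.of g, by simpa using hg⟩

theorem exists_surjective_isSimpleGroup (G : Type u) [Group G] [Finite G] [Nontrivial G] :
    ∃ (S : Type u) (_ : Group S), IsSimpleGroup S ∧ ∃ f : G →* S, Surjective f := by
  induction h : Nat.card G using Nat.strong_induction_on generalizing G with
  | _ k ih =>
  by_cases hG : IsSimpleGroup G
  · exact ⟨G, _, hG, .id G, surjective_id⟩
  obtain ⟨N, hN, hN_bot, hN_top⟩ : ∃ N : Subgroup G, N.Normal ∧ N ≠ ⊥ ∧ N ≠ ⊤ := by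
    by_contra! hG'
    exact hG ⟨fun N hN ↦ or_iff_not_imp_left.2 (hG' N hN)⟩
  have : Nontrivial (G ⧸ N) := QuotientGroup.nontrivial_iff.2 hN_top
  have hcard : Nat.card (G ⧸ N) < k := by
    rw [← h, N.card_eq_card_quotient_mul_card_subgroup]
    exact lt_mul_of_one_lt_right Nat.card_pos (N.one_lt_card_iff_ne_bot.2 hN_bot)
  obtain ⟨S, _, hS, f, hf⟩ := ih _ hcard (G ⧸ N) rfl
  exact ⟨S, _, hS, f.comp (QuotientGroup.mk' N), hf.comp (QuotientGroup.mk'_surjective N)⟩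

def HasCommonSimpleQuotient (G₁ G₂ : Type u) [Group G₁] [Group G₂] : Prop :=
  ∃ (S : Type u) (_ : Group S), IsSimpleGroup S ∧
    (∃ f : G₁ →* S, Surjective f) ∧ ∃ f : G₂ →* S, Surjective f

lemma Pi.mul_mulSingle_mul_inv {ι : Type*} [DecidableEq ι] {G : ι → Type*} [∀ i, Group (G i)]
    (x : ∀ i, G i) (i : ι) (g : G i) :
    x * Pi.mulSingle i g * x⁻¹ = Pi.mulSingle i (x i * g * (x i)⁻¹) := by
  ext j
  rcases eq_or_ne j i with rfl | hj
  · simp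
  · simp [hj]

theorem exists_surjective_comp_mulSingle {ι : Type*} [Finite ι] [DecidableEq ι]
    {G : ι → Type*} [∀ i, Group (G i)] {S : Type*} [Group S] [IsSimpleGroup S]
    (f : (∀ i, G i) →* S) (hf : Surjective f) :
    ∃ i, Surjective (f.comp (MonoidHom.mulSingle G i)) := by
  by_contra! h
  have hnormal : ∀ i, (f.comp (MonoidHom.mulSingle G i)).range.Normal := by
    refine fun i ↦ ⟨?_⟩
    rintro _ ⟨g, rfl⟩ s
    obtain ⟨x, rfl⟩ := hf s
    refine ⟨x i * g * (x i)⁻¹, ?_⟩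
    simp only [MonoidHom.comp_apply, MonoidHom.mulSingle_apply, ← map_mul, ← map_inv,
      Pi.mul_mulSingle_mul_inv]
  have hf_one : f = 1 := MonoidHom.pi_ext fun i g ↦ DFunLike.congr_fun
    (MonoidHom.range_eq_bot_iff.1 <|
      (hnormal i).eq_bot_or_eq_top.resolve_right (mt MonoidHom.range_eq_top.1 (h i))) g
  exact bot_ne_top <|
    (MonoidHom.range_eq_bot_iff.2 hf_one).symm.trans (MonoidHom.range_eq_top.2 hf)

theorem HasCommonSimpleQuotient.exists_of_pi {ι : Type} [Finite ι] {A : Type u} [Group A]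
    {G : ι → Type u} [∀ i, Group (G i)] (h : HasCommonSimpleQuotient A (∀ i, G i)) :
    ∃ i, HasCommonSimpleQuotient A (G i) := by
  classical
  obtain ⟨S, _, hS, hA, f, hf⟩ := h
  obtain ⟨i, hi⟩ := exists_surjective_comp_mulSingle f hf
  exact ⟨i, S, _, hS, hA, _, hi⟩

theorem not_hasCommonSimpleQuotient {G₁ G₂ : Type} [Group G₁] [Group G₂]
    (h1 : ∀ (S : Type) [Group S], IsSimpleGroup S → (∃ a b : S, a * b ≠ b * a) →
      ¬ (IsSubquotient S G₁ ∧ IsSubquotient S G₂))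
    (h2 : Nat.Coprime (Nat.card (Abelianization G₁)) (Nat.card (Abelianization G₂))) :
    ¬ HasCommonSimpleQuotient G₁ G₂ := by
  rintro ⟨S, _, hS, ⟨f₁, hf₁⟩, f₂, hf₂⟩
  by_cases hcomm : ∀ a b : S, a * b = b * a
  · let _ : CommGroup S := { ‹Group S› with mul_comm := hcomm }
    have hS_one : Nat.card S = 1 := Nat.eq_one_of_dvd_coprimes h2
      (card_dvd_card_abelianization_of_surjective f₁ hf₁)
      (card_dvd_card_abelianization_of_surjective f₂ hf₂)
    exact not_subsingleton S (Nat.card_eq_one_iff_unique.1 hS_one).1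
  · push Not at hcomm
    exact h1 S hS hcomm ⟨.of_surjective f₁ hf₁, .of_surjective f₂ hf₂⟩

theorem Subgroup.eq_top_of_map_fst_eq_top_of_map_snd_eq_top {G₁ G₂ : Type u} [Group G₁]
    [Group G₂] [Finite G₁] (h : ¬ HasCommonSimpleQuotient G₁ G₂) {H : Subgroup (G₁ × G₂)}
    (h₁ : H.map (MonoidHom.fst G₁ G₂) = ⊤) (h₂ : H.map (MonoidHom.snd G₁ G₂) = ⊤) :
    H = ⊤ := by
  have hI₁ : Surjective (Prod.fst ∘ H.subtype) := fun a ↦ by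
    obtain ⟨x, hx, rfl⟩ := h₁ ▸ mem_top a
    exact ⟨⟨x, hx⟩, rfl⟩
  have hI₂ : Surjective (Prod.snd ∘ H.subtype) := fun b ↦ by
    obtain ⟨x, hx, rfl⟩ := h₂ ▸ mem_top b
    exact ⟨⟨x, hx⟩, rfl⟩
  have := normal_goursatFst hI₁
  have := normal_goursatSnd hI₂
  obtain ⟨e, -⟩ := goursat_surjective hI₁ hI₂
  have hfst : H.goursatFst = ⊤ := by
    by_contra hne
    have : Nontrivial (G₁ ⧸ H.goursatFst) := QuotientGroup.nontrivial_iff.2 hne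
    obtain ⟨S, _, hS, f, hf⟩ := exists_surjective_isSimpleGroup (G₁ ⧸ H.goursatFst)
    exact h ⟨S, _, hS, ⟨f.comp (QuotientGroup.mk' _), hf.comp (QuotientGroup.mk'_surjective _)⟩,
      f.comp (e.symm.toMonoidHom.comp (QuotientGroup.mk' _)),
      hf.comp (e.symm.surjective.comp (QuotientGroup.mk'_surjective _))⟩
  rw [eq_top_iff']
  rintro ⟨a, b⟩
  obtain ⟨⟨⟨a', b⟩, hab⟩, rfl⟩ := hI₂ b
  have ha : (a * a'⁻¹, (1 : G₂)) ∈ H := mem_goursatFst.1 (hfst ▸ mem_top _)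
  simpa using H.mul_mem ha hab

def piFinSuccMulEquiv {n : ℕ} (G : Fin (n + 1) → Type*) [∀ i, Mul (G i)] :
    (∀ i, G i) ≃* G 0 × ∀ i : Fin n, G i.succ :=
  { (Fin.consEquiv G).symm with map_mul' := fun _ _ ↦ rfl }

theorem Subgroup.eq_top_of_forall_map_eval_eq_top {n : ℕ} {G : Fin n → Type u}
    [∀ i, Group (G i)] [∀ i, Finite (G i)]
    (hG : Pairwise fun i j ↦ ¬ HasCommonSimpleQuotient (G i) (G j)) {H : Subgroup (∀ i, G i)}
    (hH : ∀ i, H.map (Pi.evalMonoidHom G i) = ⊤) : H = ⊤ := by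
  induction n with
  | zero => exact Subsingleton.elim _ _
  | succ n ih =>
    let e := piFinSuccMulEquiv G
    have h0 : ¬ HasCommonSimpleQuotient (G 0) (∀ i : Fin n, G i.succ) := fun h ↦ by
      obtain ⟨i, hi⟩ := h.exists_of_pi
      exact hG (Fin.succ_ne_zero i).symm hi
    have hrest : (H.map e.toMonoidHom).map (MonoidHom.snd _ _) = ⊤ :=
      ih (fun i j hij ↦ hG ((Fin.succ_injective _).ne hij)) fun i ↦ by
        rw [map_map, map_map]
        exact hH i.succ
    have hfirst : (H.map e.toMonoidHom).map (MonoidHom.fst _ _) = ⊤ := by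
      rw [map_map]
      exact hH 0
    rw [← comap_map_eq_self_of_injective (f := e.toMonoidHom) e.injective H,
      eq_top_of_map_fst_eq_top_of_map_snd_eq_top h0 hfirst hrest, comap_top]

/-- Goursat's lemma for several factors. -/
theorem statement15 (n : ℕ) (G : Fin n → Type) [∀ i, Group (G i)] [∀ i, Finite (G i)]
    (h1 : ∀ i j, i ≠ j → ∀ (S : Type) [Group S], IsSimpleGroup S →
      (∃ a b : S, a * b ≠ b * a) →
      ¬ (IsSubquotient S (G i) ∧ IsSubquotient S (G j)))
    (h2 : ∀ i j, i ≠ j →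
      Nat.Coprime (Nat.card (Abelianization (G i))) (Nat.card (Abelianization (G j))))
    (H : Subgroup (∀ i, G i))
    (hH : ∀ i, H.map (Pi.evalMonoidHom G i) = ⊤) :
    H = ⊤ :=
  Subgroup.eq_top_of_forall_map_eval_eq_top
    (fun i j hij ↦ not_hasCommonSimpleQuotient (h1 i j hij) (h2 i j hij)) hH
end
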